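/- Let φ : [0,T] → ℝ be differentiable with e^{φ(t)²/2} N(φ(t)) = e^{r(T−t)}/2 for all t ∈ [0,T], and set σ²(t) := −2·φ(t)·φ′(t). Then (i) σ²(t) > 0 for every t ∈ [0,T); (ii) ∫_t^T σ²(s) ds = φ(t)² for every t ∈ [0,T]; and (iii) the boundary formula K·e^{−r(T−t)}·e^{φ(t)²/2} = K/(2·N(φ(t))) holds for every t ∈ [0,T] and every K > 0. -/

import Mathlib

open MeasureTheory Real Set Filter

/-- Standard normal cdf `N(x)`. -/
noncomputable def stdCdf (x : ℝ) : ℝ := ∫ y in Set.Iic x, Real.exp (-y ^ 2 / 2) / Real.sqrt (2 * Real.pi)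

/-!
Write `F x = exp (x ^ 2 / 2) * N x`. Then `F' x = x * F x + 1 / √(2π)`, `F > 1/2` on `(0, ∞)`, and
`F ≤ 1/2` on `(-∞, 0]`, the latter because for `y ≤ x ≤ 0` the Gaussian density at `y` is at most
`exp (-x ^ 2 / 2)` times the density at `y - x`. Since `F (φ t) = exp (r (T - t)) / 2` exceeds `1/2`
for `t < T`, `φ > 0` on `[0, T)`, and at `t = T` continuity forces `φ T = 0`. Differentiating the
relation gives `φ' (φ E + 1 / √(2π)) = -r E < 0` with `E = exp (r (T - t)) / 2`, so `φ' < 0`,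
`σ² = -2 φ φ' > 0`, and `∫_t^T σ² = φ t ^ 2 - φ T ^ 2 = φ t ^ 2`.
-/

open ProbabilityTheory Topology
open scoped NNReal

lemma continuous_gaussianPDFReal (μ : ℝ) (v : ℝ≥0) : Continuous (gaussianPDFReal μ v) := by
  unfold gaussianPDFReal
  fun_prop

lemma gaussianPDFReal_zero_neg (v : ℝ≥0) (x : ℝ) :
    gaussianPDFReal 0 v (-x) = gaussianPDFReal 0 v x := by
  simp [gaussianPDFReal]

lemma stdCdf_eq_setIntegral (x : ℝ) : stdCdf x = ∫ y in Iic x, gaussianPDFReal 0 1 y := by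
  simp [stdCdf, gaussianPDFReal, div_eq_inv_mul]

lemma stdCdf_sub_stdCdf (a b : ℝ) : stdCdf b - stdCdf a = ∫ y in a..b, gaussianPDFReal 0 1 y := by
  simp only [stdCdf_eq_setIntegral]
  exact intervalIntegral.integral_Iic_sub_Iic (integrable_gaussianPDFReal 0 1).integrableOn
    (integrable_gaussianPDFReal 0 1).integrableOn

lemma hasDerivAt_stdCdf (x : ℝ) : HasDerivAt stdCdf (gaussianPDFReal 0 1 x) x := by
  have hcont := continuous_gaussianPDFReal 0 1
  have hstd : stdCdf = fun u ↦ stdCdf 0 + ∫ y in (0 : ℝ)..u, gaussianPDFReal 0 1 y := by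
    funext u
    rw [← stdCdf_sub_stdCdf]
    ring
  rw [hstd]
  exact (intervalIntegral.integral_hasDerivAt_right (integrable_gaussianPDFReal 0 1).intervalIntegrable
    (hcont.stronglyMeasurableAtFilter _ _) hcont.continuousAt).const_add _

lemma stdCdf_pos (x : ℝ) : 0 < stdCdf x := by
  rw [stdCdf_eq_setIntegral, setIntegral_pos_iff_support_of_nonneg_ae
    (.of_forall (gaussianPDFReal_nonneg 0 1)) (integrable_gaussianPDFReal 0 1).integrableOn,
    Function.support_eq_univ fun y ↦ (gaussianPDFReal_pos 0 1 y one_ne_zero).ne']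
  simp

lemma stdCdf_zero : stdCdf 0 = 1 / 2 := by
  have hsymm : stdCdf 0 = ∫ y in Ioi 0, gaussianPDFReal 0 1 y := by
    have h := integral_comp_neg_Iic 0 (gaussianPDFReal 0 1)
    simp only [gaussianPDFReal_zero_neg, neg_zero] at h
    rw [stdCdf_eq_setIntegral, h]
  have htotal : stdCdf 0 + ∫ y in Ioi 0, gaussianPDFReal 0 1 y = 1 := by
    rw [stdCdf_eq_setIntegral, intervalIntegral.integral_Iic_add_Ioi
      (integrable_gaussianPDFReal 0 1).integrableOn (integrable_gaussianPDFReal 0 1).integrableOn,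
      integral_gaussianPDFReal_eq_one 0 one_ne_zero]
  linarith

lemma half_lt_stdCdf {x : ℝ} (hx : 0 < x) : 1 / 2 < stdCdf x := by
  have hpos : 0 < ∫ y in (0 : ℝ)..x, gaussianPDFReal 0 1 y :=
    intervalIntegral.intervalIntegral_pos_of_pos (integrable_gaussianPDFReal 0 1).intervalIntegrable
      (fun y ↦ gaussianPDFReal_pos 0 1 y one_ne_zero) hx
  linarith [stdCdf_sub_stdCdf 0 x, stdCdf_zero]

lemma stdCdf_le_of_nonpos {x : ℝ} (hx : x ≤ 0) : stdCdf x ≤ exp (-x ^ 2 / 2) / 2 := by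
  have hpt : ∀ y ∈ Iic x,
      gaussianPDFReal 0 1 y ≤ exp (-x ^ 2 / 2) * gaussianPDFReal 0 1 (y - x) := by
    intro y (hy : y ≤ x)
    simp only [gaussianPDFReal, NNReal.coe_one, mul_one, sub_zero, mul_left_comm _ (_ : ℝ)⁻¹,
      ← exp_add]
    gcongr
    nlinarith
  have hshift : ∫ y in Iic x, gaussianPDFReal 0 1 (y - x) = stdCdf 0 := by
    have h := (measurePreserving_sub_right volume x).setIntegral_preimage_emb
      (measurableEmbedding_subRight x) (gaussianPDFReal 0 1) (Iic 0)
    simpa [stdCdf_eq_setIntegral] using h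
  calc stdCdf x ≤ ∫ y in Iic x, exp (-x ^ 2 / 2) * gaussianPDFReal 0 1 (y - x) := by
        rw [stdCdf_eq_setIntegral]
        exact setIntegral_mono_on (integrable_gaussianPDFReal 0 1).integrableOn
          (((integrable_gaussianPDFReal 0 1).comp_sub_right x).const_mul _).integrableOn
          measurableSet_Iic hpt
    _ = exp (-x ^ 2 / 2) / 2 := by
        rw [integral_const_mul, hshift, stdCdf_zero]
        ring

lemma exp_mul_stdCdf_le_half {x : ℝ} (hx : x ≤ 0) : exp (x ^ 2 / 2) * stdCdf x ≤ 1 / 2 := by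
  calc exp (x ^ 2 / 2) * stdCdf x ≤ exp (x ^ 2 / 2) * (exp (-x ^ 2 / 2) / 2) := by
        gcongr
        exact stdCdf_le_of_nonpos hx
    _ = 1 / 2 := by
        rw [mul_div_assoc', ← exp_add]
        simp [neg_div]

lemma half_lt_exp_mul_stdCdf {x : ℝ} (hx : 0 < x) : 1 / 2 < exp (x ^ 2 / 2) * stdCdf x := by
  calc (1 : ℝ) / 2 < 1 * stdCdf x := by simpa using half_lt_stdCdf hx
    _ ≤ exp (x ^ 2 / 2) * stdCdf x := by
        gcongr
        · exact (stdCdf_pos x).le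
        · exact one_le_exp (by positivity)

lemma exp_mul_gaussianPDFReal (x : ℝ) :
    exp (x ^ 2 / 2) * gaussianPDFReal 0 1 x = (√(2 * π))⁻¹ := by
  simp only [gaussianPDFReal, NNReal.coe_one, mul_one, sub_zero, mul_left_comm _ (_ : ℝ)⁻¹,
    ← exp_add, neg_div, add_neg_cancel, exp_zero]

lemma hasDerivAt_exp_mul_stdCdf (x : ℝ) :
    HasDerivAt (fun x ↦ exp (x ^ 2 / 2) * stdCdf x)
      (x * (exp (x ^ 2 / 2) * stdCdf x) + (√(2 * π))⁻¹) x := by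
  have hexp : HasDerivAt (fun x ↦ exp (x ^ 2 / 2)) (exp (x ^ 2 / 2) * x) x := by
    simpa using ((hasDerivAt_pow 2 x).div_const 2).exp
  refine (hexp.mul (hasDerivAt_stdCdf x)).congr_deriv ?_
  rw [← exp_mul_gaussianPDFReal x]
  ring

/-- The sign condition makes `-φ ^ 2` monotone, which makes its derivative integrable. -/
lemma integral_neg_two_mul_mul_eq_sq_sub_sq {φ φ' : ℝ → ℝ} {a b : ℝ} (hab : a ≤ b)
    (hcont : ContinuousOn φ (Icc a b)) (hderiv : ∀ x ∈ Ioo a b, HasDerivAt φ (φ' x) x)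
    (hsign : ∀ x ∈ Ioo a b, φ x * φ' x ≤ 0) :
    ∫ x in a..b, -2 * φ x * φ' x = φ a ^ 2 - φ b ^ 2 := by
  have hcont' : ContinuousOn (fun x ↦ -φ x ^ 2) (Icc a b) := (hcont.pow 2).neg
  have hderiv' : ∀ x ∈ Ioo a b, HasDerivAt (fun x ↦ -φ x ^ 2) (-2 * φ x * φ' x) x :=
    fun x hx ↦ ((hderiv x hx).pow 2).neg.congr_deriv (by ring)
  have hint := intervalIntegral.integrableOn_deriv_of_nonneg hcont' hderiv'
    fun x hx ↦ by nlinarith [hsign x hx]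
  rw [intervalIntegral.integral_eq_sub_of_hasDerivAt_of_le hab hcont' hderiv'
    ((intervalIntegrable_iff_integrableOn_Ioc_of_le hab).2 hint)]
  ring

section BoundaryCurve

variable {r T : ℝ} {φ φ' : ℝ → ℝ}

lemma pos_of_exp_mul_stdCdf_eq (hr : 0 < r)
    (heq : ∀ t ∈ Icc 0 T, exp (φ t ^ 2 / 2) * stdCdf (φ t) = exp (r * (T - t)) / 2)
    {t : ℝ} (ht₀ : 0 ≤ t) (htT : t < T) : 0 < φ t := by
  by_contra! hφ
  have hexp : 1 < exp (r * (T - t)) := one_lt_exp_iff.2 (mul_pos hr (sub_pos.2 htT))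
  linarith [heq t ⟨ht₀, htT.le⟩, exp_mul_stdCdf_le_half hφ]

lemma eq_zero_of_exp_mul_stdCdf_eq (hr : 0 < r) (hT : 0 < T) (hcont : ContinuousOn φ (Icc 0 T))
    (heq : ∀ t ∈ Icc 0 T, exp (φ t ^ 2 / 2) * stdCdf (φ t) = exp (r * (T - t)) / 2) :
    φ T = 0 := by
  have hT_mem : T ∈ Icc 0 T := ⟨hT.le, le_rfl⟩
  have hnonneg : 0 ≤ φ T := by
    have hne : (𝓝[Ico 0 T] T).NeBot := by
      rw [← mem_closure_iff_nhdsWithin_neBot, closure_Ico hT.ne]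
      exact hT_mem
    refine ge_of_tendsto ((hcont T hT_mem).mono Ico_subset_Icc_self) ?_
    filter_upwards [self_mem_nhdsWithin] with s hs
    exact (pos_of_exp_mul_stdCdf_eq hr heq hs.1 hs.2).le
  refine le_antisymm (not_lt.1 fun hpos ↦ ?_) hnonneg
  have h := heq T hT_mem
  rw [sub_self, mul_zero, exp_zero] at h
  linarith [half_lt_exp_mul_stdCdf hpos]

lemma deriv_mul_eq_of_exp_mul_stdCdf_eq (hT : 0 < T)
    (hderiv : ∀ t ∈ Icc 0 T, HasDerivWithinAt φ (φ' t) (Icc 0 T) t)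
    (heq : ∀ t ∈ Icc 0 T, exp (φ t ^ 2 / 2) * stdCdf (φ t) = exp (r * (T - t)) / 2)
    {t : ℝ} (ht : t ∈ Icc 0 T) :
    φ' t * (φ t * (exp (r * (T - t)) / 2) + (√(2 * π))⁻¹) = -r * (exp (r * (T - t)) / 2) := by
  have hlhs : HasDerivWithinAt (fun s ↦ exp (r * (T - s)) / 2)
      (φ' t * (φ t * (exp (r * (T - t)) / 2) + (√(2 * π))⁻¹)) (Icc 0 T) t := by
    have h := (hasDerivAt_exp_mul_stdCdf (φ t)).comp_hasDerivWithinAt t (hderiv t ht)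
    rw [heq t ht, mul_comm] at h
    exact h.congr (fun s hs ↦ (heq s hs).symm) (heq t ht).symm
  have hrhs : HasDerivWithinAt (fun s ↦ exp (r * (T - s)) / 2)
      (-r * (exp (r * (T - t)) / 2)) (Icc 0 T) t := by
    have h := ((((hasDerivAt_id t).const_sub T).const_mul r).exp.div_const 2).hasDerivWithinAt
      (s := Icc 0 T)
    exact h.congr_deriv (by simp only [id_eq, mul_neg, mul_one, neg_mul]; ring)
  exact (uniqueDiffOn_Icc hT t ht).eq_deriv _ hlhs hrhs

lemma deriv_neg_of_exp_mul_stdCdf_eq (hr : 0 < r) (hT : 0 < T)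
    (hderiv : ∀ t ∈ Icc 0 T, HasDerivWithinAt φ (φ' t) (Icc 0 T) t)
    (heq : ∀ t ∈ Icc 0 T, exp (φ t ^ 2 / 2) * stdCdf (φ t) = exp (r * (T - t)) / 2)
    {t : ℝ} (ht : t ∈ Icc 0 T) (hφ : 0 ≤ φ t) : φ' t < 0 := by
  have hE : 0 < exp (r * (T - t)) / 2 := by positivity
  have hden : 0 < φ t * (exp (r * (T - t)) / 2) + (√(2 * π))⁻¹ := by positivity
  have h := deriv_mul_eq_of_exp_mul_stdCdf_eq hT hderiv heq ht
  nlinarith [mul_pos hr hE]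

end BoundaryCurve

theorem volatility_from_phi (r T : ℝ) (hr : 0 < r) (hT : 0 < T)
    (φ φ' : ℝ → ℝ)
    (hderiv : ∀ t ∈ Set.Icc 0 T, HasDerivWithinAt φ (φ' t) (Set.Icc 0 T) t)
    (heq : ∀ t ∈ Set.Icc 0 T,
      Real.exp ((φ t) ^ 2 / 2) * stdCdf (φ t) = Real.exp (r * (T - t)) / 2) :
    (∀ t, 0 ≤ t → t < T → 0 < -2 * φ t * φ' t) ∧
    (∀ t ∈ Set.Icc 0 T, ∫ s in t..T, -2 * φ s * φ' s = (φ t) ^ 2) ∧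
    (∀ K : ℝ, 0 < K → ∀ t ∈ Set.Icc 0 T,
      K * Real.exp (-r * (T - t)) * Real.exp ((φ t) ^ 2 / 2) = K / (2 * stdCdf (φ t))) := by
  have hcont : ContinuousOn φ (Icc 0 T) := fun t ht ↦ (hderiv t ht).continuousWithinAt
  have hφT := eq_zero_of_exp_mul_stdCdf_eq hr hT hcont heq
  have hφ_nonneg : ∀ t ∈ Icc 0 T, 0 ≤ φ t := by
    rintro t ⟨ht₀, htT⟩
    rcases htT.lt_or_eq with htT | rfl
    · exact (pos_of_exp_mul_stdCdf_eq hr heq ht₀ htT).le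
    · exact hφT.ge
  have hφ'_neg : ∀ t ∈ Icc 0 T, φ' t < 0 := fun t ht ↦
    deriv_neg_of_exp_mul_stdCdf_eq hr hT hderiv heq ht (hφ_nonneg t ht)
  refine ⟨fun t ht₀ htT ↦ ?_, fun t ⟨ht₀, htT⟩ ↦ ?_, fun K hK t ht ↦ ?_⟩
  · nlinarith [pos_of_exp_mul_stdCdf_eq hr heq ht₀ htT, hφ'_neg t ⟨ht₀, htT.le⟩]
  · have hsub : Icc t T ⊆ Icc 0 T := Icc_subset_Icc_left ht₀
    rw [integral_neg_two_mul_mul_eq_sq_sub_sq htT (hcont.mono hsub)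
      (fun x hx ↦ (hderiv x (hsub (Ioo_subset_Icc_self hx))).hasDerivAt
        (Icc_mem_nhds (ht₀.trans_lt hx.1) hx.2))
      (fun x hx ↦ mul_nonpos_of_nonneg_of_nonpos (hφ_nonneg x (hsub (Ioo_subset_Icc_self hx)))
        (hφ'_neg x (hsub (Ioo_subset_Icc_self hx))).le), hφT]
    ring
  · have hN := stdCdf_pos (φ t)
    rw [eq_div_iff (by positivity)]
    calc K * exp (-r * (T - t)) * exp (φ t ^ 2 / 2) * (2 * stdCdf (φ t))
        = 2 * K * exp (-r * (T - t)) * (exp (φ t ^ 2 / 2) * stdCdf (φ t)) := by ring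
      _ = K * exp (-r * (T - t) + r * (T - t)) := by rw [heq t ht, exp_add]; ring
      _ = K := by simp
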